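/- arXiv:2207.00963 — 9 statements merged into one kernel-verified Lean document; each statement's English description precedes it below -/
import Mathlib

section
/- Let T be a nonexpansive map of a metric space X with minimal displacement d(T) = 0. Then there exists a nonexpansive function h : X → ℝ with h(x₀) = 0 (a metric functional, obtained as a limit of functions h_y(·) = d(·, y) − d(x₀, y)) such that h(Tx) ≤ h(x) for all x ∈ X. If moreover T is an isometric embedding, then h(Tx) = h(x) for all x. -/
/-- If `T` is nonexpansive with minimal displacement `0`, there is a
metric functional `h` (a pointwise limit of `h_y = d(·,y) - d(x₀,y)`, hence
nonexpansive with `h x₀ = 0`) such that `h (T x) ≤ h x` for all `x`; if moreover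
`T` is an isometric embedding then `h (T x) = h x` for all `x`. -/
theorem exists_metric_functional_of_zero_displacement
    {X : Type*} [MetricSpace X] [Nonempty X] (x₀ : X) (T : X → X)
    (hT : ∀ x y, dist (T x) (T y) ≤ dist x y)
    (hd : (⨅ x : X, dist x (T x)) = 0) :
    ∃ h : X → ℝ,
      h ∈ closure (Set.range fun y : X => fun x : X => dist x y - dist x₀ y) ∧
      (∀ x y, |h x - h y| ≤ dist x y) ∧ h x₀ = 0 ∧
      (∀ x, h (T x) ≤ h x) ∧
      (Isometry T → ∀ x, h (T x) = h x) := by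
  classical
  -- choose a sequence of points with small displacement
  have hy : ∀ n : ℕ, ∃ y : X, dist y (T y) < 1 / (n + 1) := by
    intro n
    have hpos : (0:ℝ) < 1 / (n + 1) := by positivity
    have : (⨅ x : X, dist x (T x)) < 1 / (n + 1) := by rw [hd]; exact hpos
    exact exists_lt_of_ciInf_lt this
  choose y hyd using hy
  set f : X → X → ℝ := fun y x => dist x y - dist x₀ y with hfdef
  have hbound : ∀ z x, |f z x| ≤ dist x₀ x := by
    intro z x
    simpa [hfdef, dist_comm] using abs_dist_sub_le x x₀ z
  set K := closure (Set.range f) with hK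
  have hKcomp : IsCompact K := by
    have hcomp : IsCompact (Set.pi Set.univ
        (fun x : X => Set.Icc (-(dist x₀ x)) (dist x₀ x))) :=
      isCompact_univ_pi fun x => isCompact_Icc
    refine hcomp.of_isClosed_subset isClosed_closure (closure_minimal ?_ hcomp.isClosed)
    rintro _ ⟨z, rfl⟩ x _
    exact abs_le.mp (hbound z x)
  set F : Ultrafilter ℕ := Ultrafilter.of Filter.atTop with hF
  have hFle : (F : Filter ℕ) ≤ Filter.atTop := Ultrafilter.of_le _
  set g : ℕ → X → ℝ := fun n => f (y n) with hg
  have hgK : ∀ n, g n ∈ K := fun n => subset_closure ⟨y n, rfl⟩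
  obtain ⟨h, hhK, hconv⟩ := hKcomp.ultrafilter_le_nhds (F.map g)
    (Filter.le_principal_iff.mpr (Filter.mem_map.mpr (Filter.univ_mem' hgK)))
  have hconv' : Filter.Tendsto g F (nhds h) := hconv
  have hpt : ∀ x, Filter.Tendsto (fun n => g n x) F (nhds (h x)) := by
    intro x
    exact (tendsto_pi_nhds.mp hconv') x
  -- the displacement sequence tends to 0
  have hd0 : Filter.Tendsto (fun n : ℕ => dist (y n) (T (y n))) (F : Filter ℕ) (nhds 0) := by
    refine Filter.Tendsto.mono_left ?_ hFle
    refine squeeze_zero (fun n => dist_nonneg) (fun n => (hyd n).le) ?_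
    exact tendsto_one_div_add_atTop_nhds_zero_nat
  refine ⟨h, hhK, ?_, ?_, ?_, ?_⟩
  · -- nonexpansive
    intro x x'
    have hle : ∀ n, |g n x - g n x'| ≤ dist x x' := by
      intro n
      have : g n x - g n x' = dist x (y n) - dist x' (y n) := by
        simp [hg, hfdef]
      rw [this]
      exact abs_dist_sub_le x x' (y n)
    have htend : Filter.Tendsto (fun n => |g n x - g n x'|) F (nhds |h x - h x'|) :=
      ((hpt x).sub (hpt x')).abs
    exact le_of_tendsto htend (Filter.Eventually.of_forall hle)
  · -- h x₀ = 0
    have : ∀ n, g n x₀ = 0 := fun n => by simp [hg, hfdef]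
    have htend : Filter.Tendsto (fun n => g n x₀) F (nhds 0) := by
      simpa [this] using tendsto_const_nhds (α := ℝ) (f := (F : Filter ℕ))
    exact tendsto_nhds_unique (hpt x₀) htend
  · -- h (T x) ≤ h x
    intro x
    have hle : ∀ n, g n (T x) ≤ g n x + dist (y n) (T (y n)) := by
      intro n
      have h1 : dist (T x) (y n) ≤ dist x (y n) + dist (y n) (T (y n)) :=
        calc dist (T x) (y n) ≤ dist (T x) (T (y n)) + dist (T (y n)) (y n) :=
              dist_triangle _ _ _
          _ ≤ dist x (y n) + dist (y n) (T (y n)) := by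
              have := hT x (y n)
              rw [dist_comm (T (y n)) (y n)]
              linarith
      simp only [hg, hfdef]
      linarith
    have htend : Filter.Tendsto (fun n => g n x + dist (y n) (T (y n))) F (nhds (h x + 0)) :=
      (hpt x).add hd0
    rw [add_zero] at htend
    exact le_of_tendsto_of_tendsto' (hpt (T x)) htend hle
  · -- isometry case: also h x ≤ h (T x)
    intro hiso x
    have h1 : ∀ n, g n x ≤ g n (T x) + dist (y n) (T (y n)) := by
      intro n
      have : dist x (y n) ≤ dist (T x) (y n) + dist (y n) (T (y n)) := by
        have he : dist (T x) (T (y n)) = dist x (y n) := hiso.dist_eq x (y n)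
        calc dist x (y n) = dist (T x) (T (y n)) := he.symm
          _ ≤ dist (T x) (y n) + dist (y n) (T (y n)) := by
              have := dist_triangle (T x) (y n) (T (y n))
              rw [dist_comm (y n) (T (y n))] at this ⊢
              linarith
      simp only [hg, hfdef]
      linarith
    have htend : Filter.Tendsto (fun n => g n (T x) + dist (y n) (T (y n))) F
        (nhds (h (T x) + 0)) := (hpt (T x)).add hd0
    rw [add_zero] at htend
    have h2 : h x ≤ h (T x) := le_of_tendsto_of_tendsto' (hpt x) htend h1
    -- and h (T x) ≤ h x as above
    have hle : ∀ n, g n (T x) ≤ g n x + dist (y n) (T (y n)) := by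
      intro n
      have h1' : dist (T x) (y n) ≤ dist x (y n) + dist (y n) (T (y n)) :=
        calc dist (T x) (y n) ≤ dist (T x) (T (y n)) + dist (T (y n)) (y n) :=
              dist_triangle _ _ _
          _ ≤ dist x (y n) + dist (y n) (T (y n)) := by
              have := hT x (y n)
              rw [dist_comm (T (y n)) (y n)]
              linarith
      simp only [hg, hfdef]
      linarith
    have htend2 : Filter.Tendsto (fun n => g n x + dist (y n) (T (y n))) F (nhds (h x + 0)) :=
      (hpt x).add hd0
    rw [add_zero] at htend2
    exact le_antisymm (le_of_tendsto_of_tendsto' (hpt (T x)) htend2 hle) h2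
end

section
/- Let X be a metric space and Y its metric completion. Every nonexpansive function h : X → ℝ extends uniquely to a nonexpansive function on Y, and via this extension the metric compactification of X is canonically homeomorphic to the metric compactification of Y. -/
open UniformSpace Set

section aux

variable {Z : Type*} [MetricSpace Z]

lemma nonexp_isClosed : IsClosed {h : Z → ℝ | ∀ x y, |h x - h y| ≤ dist x y} := by
  have : {h : Z → ℝ | ∀ x y, |h x - h y| ≤ dist x y} =
      ⋂ (x) (y), {h : Z → ℝ | |h x - h y| ≤ dist x y} := by
    ext h; simp [Set.mem_iInter]
  rw [this]
  exact isClosed_iInter fun x => isClosed_iInter fun y =>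
    isClosed_le (((continuous_apply x).sub (continuous_apply y)).abs) continuous_const

lemma mem_closure_props (z₀ : Z) {h : Z → ℝ}
    (hh : h ∈ closure (Set.range fun y : Z => fun x : Z => dist x y - dist z₀ y)) :
    (∀ x y, |h x - h y| ≤ dist x y) ∧ h z₀ = 0 := by
  have hsub : closure (Set.range fun y : Z => fun x : Z => dist x y - dist z₀ y) ⊆
      {h : Z → ℝ | ∀ x y, |h x - h y| ≤ dist x y} ∩ {h : Z → ℝ | h z₀ = 0} := by
    apply closure_minimal
    · rintro _ ⟨y, rfl⟩
      refine ⟨fun x x' => ?_, by simp⟩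
      have := abs_dist_sub_le x x' y
      simpa using this
    · exact nonexp_isClosed.inter (isClosed_eq (continuous_apply z₀) continuous_const)
  exact hsub hh

lemma nonexp_lipschitz {h : Z → ℝ} (hh : ∀ x y, |h x - h y| ≤ dist x y) :
    LipschitzWith 1 h :=
  LipschitzWith.of_dist_le_mul fun x y => by
    rw [Real.dist_eq]; simpa using hh x y

lemma ext_coe {h : Z → ℝ} (hh : ∀ x y, |h x - h y| ≤ dist x y) (x : Z) :
    Completion.extension h (x : Completion Z) = h x :=
  Completion.extension_coe (nonexp_lipschitz hh).uniformContinuous x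

lemma ext_nonexp {h : Z → ℝ} (hh : ∀ x y, |h x - h y| ≤ dist x y)
    (a b : Completion Z) : |Completion.extension h a - Completion.extension h b| ≤ dist a b := by
  refine Completion.induction_on₂ a b ?_ ?_
  · exact isClosed_le
      (((Completion.continuous_extension.comp continuous_fst).sub
        (Completion.continuous_extension.comp continuous_snd)).abs) continuous_dist
  · intro x y
    rw [ext_coe hh, ext_coe hh, Completion.dist_eq]
    exact hh x y

end aux

/-- Every nonexpansive function `h : X → ℝ` extends uniquely to a
nonexpansive function on the metric completion `Y` of `X`, and via restriction
the metric compactification of `X` is canonically homeomorphic to that of `Y`. -/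
theorem metric_compactification_of_completion
    {X : Type*} [MetricSpace X] (x₀ : X) :
    (∀ h : X → ℝ, (∀ x y, |h x - h y| ≤ dist x y) →
      ∃! H : UniformSpace.Completion X → ℝ,
        (∀ a b : UniformSpace.Completion X, |H a - H b| ≤ dist a b) ∧
        ∀ x : X, H (x : UniformSpace.Completion X) = h x) ∧
    ∃ e : {h : X → ℝ //
            h ∈ closure (Set.range fun y : X => fun x : X => dist x y - dist x₀ y)} ≃ₜ
          {H : UniformSpace.Completion X → ℝ //
            H ∈ closure (Set.range fun b : UniformSpace.Completion X =>
              fun a : UniformSpace.Completion X =>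
                dist a b - dist (x₀ : UniformSpace.Completion X) b)},
      ∀ H, ((e.symm H : X → ℝ)) =
        fun x : X => (H : UniformSpace.Completion X → ℝ) (x : UniformSpace.Completion X) := by
  set S : Set (X → ℝ) := closure (Set.range fun y : X => fun x : X => dist x y - dist x₀ y)
    with hS
  set T : Set (Completion X → ℝ) := closure (Set.range fun b : Completion X =>
    fun a : Completion X => dist a b - dist (x₀ : Completion X) b) with hT
  -- uniqueness of extension
  have uniq : ∀ h : X → ℝ, (∀ x y, |h x - h y| ≤ dist x y) →
      ∃! H : Completion X → ℝ,
        (∀ a b : Completion X, |H a - H b| ≤ dist a b) ∧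
        ∀ x : X, H (x : Completion X) = h x := by
    intro h hh
    refine ⟨Completion.extension h, ⟨ext_nonexp hh, ext_coe hh⟩, ?_⟩
    rintro H ⟨hne, hco⟩
    refine Completion.ext (nonexp_lipschitz hne).continuous
      Completion.continuous_extension fun x => ?_
    rw [hco x, ext_coe hh]
  refine ⟨uniq, ?_⟩
  -- restriction maps T into S
  have restrict_mem : ∀ H ∈ T, (fun x : X => H (x : Completion X)) ∈ S := by
    intro H hH
    set r : (Completion X → ℝ) → (X → ℝ) := fun H x => H (x : Completion X) with hr
    have hrc : Continuous r := continuous_pi fun x => continuous_apply _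
    have h1 : r H ∈ closure (r '' (Set.range fun b : Completion X =>
        fun a : Completion X => dist a b - dist (x₀ : Completion X) b)) :=
      image_closure_subset_closure_image hrc ⟨H, hH, rfl⟩
    refine closure_minimal ?_ isClosed_closure h1
    rintro _ ⟨_, ⟨b, rfl⟩, rfl⟩
    -- show (fun x => dist ↑x b - dist ↑x₀ b) ∈ S
    set φ : Completion X → (X → ℝ) := fun b x => dist (x : Completion X) b -
      dist (x₀ : Completion X) b with hφ
    have hφc : Continuous φ := continuous_pi fun x =>
      (continuous_const.dist continuous_id).sub (continuous_const.dist continuous_id)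
    have hb : b ∈ closure (Set.range ((↑) : X → Completion X)) :=
      (Completion.denseRange_coe (α := X)) b
    have h2 : φ b ∈ closure (φ '' Set.range ((↑) : X → Completion X)) :=
      image_closure_subset_closure_image hφc ⟨b, hb, rfl⟩
    refine closure_minimal ?_ isClosed_closure h2
    rintro _ ⟨_, ⟨y, rfl⟩, rfl⟩
    apply subset_closure
    exact ⟨y, by funext x; simp [hφ, Completion.dist_eq]⟩
  -- extension maps S into T
  have extend_mem : ∀ h ∈ S, Completion.extension h ∈ T := by
    intro h hhS
    have hcont : ContinuousOn (fun h : X → ℝ => Completion.extension h) S := by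
      intro g hgS
      have hgne := (mem_closure_props x₀ hgS).1
      rw [ContinuousWithinAt, tendsto_pi_nhds]
      intro a
      rw [Metric.tendsto_nhds]
      intro ε hε
      obtain ⟨x, hx⟩ : ∃ x : X, dist a (x : Completion X) < ε / 4 :=
        Metric.denseRange_iff.mp Completion.denseRange_coe a (ε / 4) (by linarith)
      have hev : ∀ᶠ g' : X → ℝ in nhds g, dist (g' x) (g x) < ε / 4 :=
        Metric.tendsto_nhds.mp ((continuous_apply x).tendsto g) (ε / 4) (by linarith)
      filter_upwards [hev.filter_mono nhdsWithin_le_nhds, self_mem_nhdsWithin] with g' hg' hg'S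
      have hg'ne := (mem_closure_props x₀ hg'S).1
      have e1 : dist (Completion.extension g' a) (g' x) < ε / 4 := by
        rw [Real.dist_eq, ← ext_coe hg'ne x]
        exact lt_of_le_of_lt (ext_nonexp hg'ne a _) hx
      have e2 : dist (g x) (Completion.extension g a) < ε / 4 := by
        rw [Real.dist_eq, ← ext_coe hgne x, abs_sub_comm]
        exact lt_of_le_of_lt (ext_nonexp hgne a _) hx
      calc dist (Completion.extension g' a) (Completion.extension g a)
          ≤ dist (Completion.extension g' a) (g' x) + dist (g' x) (g x) +
            dist (g x) (Completion.extension g a) := dist_triangle4 _ _ _ _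
        _ < ε / 4 + ε / 4 + ε / 4 := by linarith [e1, hg', e2]
        _ < ε := by linarith
    have h1 : Completion.extension h ∈
        closure ((fun h : X → ℝ => Completion.extension h) ''
          (Set.range fun y : X => fun x : X => dist x y - dist x₀ y)) := by
      have := hcont.image_closure (s := Set.range fun y : X => fun x : X => dist x y - dist x₀ y)
      exact this ⟨h, hhS, rfl⟩
    refine closure_minimal ?_ isClosed_closure h1
    rintro _ ⟨_, ⟨y, rfl⟩, rfl⟩
    apply subset_closure
    refine ⟨(y : Completion X), ?_⟩
    have hne : ∀ x x' : X, |(fun x : X => dist x y - dist x₀ y) x -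
        (fun x : X => dist x y - dist x₀ y) x'| ≤ dist x x' := by
      intro x x'; simpa using abs_dist_sub_le x x' y
    show (fun a : Completion X => dist a ((y : Completion X)) -
      dist ((x₀ : X) : Completion X) ((y : Completion X))) = _
    refine Completion.ext ((continuous_id.dist continuous_const).sub continuous_const)
      Completion.continuous_extension fun x => ?_
    show dist ((x : X) : Completion X) ((y : X) : Completion X) -
        dist ((x₀ : X) : Completion X) ((y : X) : Completion X) =
      Completion.extension (fun x : X => dist x y - dist x₀ y) ((x : X) : Completion X)
    rw [ext_coe hne]
    simp [Completion.dist_eq]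
  -- the restriction map as a bijection
  have hTprops := fun H (hH : H ∈ T) => mem_closure_props ((x₀ : Completion X)) hH
  let R : {H : Completion X → ℝ // H ∈ T} → {h : X → ℝ // h ∈ S} :=
    fun H => ⟨fun x => H.1 (x : Completion X), restrict_mem H.1 H.2⟩
  have hRc : Continuous R := by
    apply Continuous.subtype_mk
    exact continuous_pi fun x : X =>
      (continuous_apply ((x : Completion X))).comp continuous_subtype_val
  have hRinj : Function.Injective R := by
    rintro ⟨H, hH⟩ ⟨H', hH'⟩ hEq
    have h1 := (hTprops H hH).1
    have h2 := (hTprops H' hH').1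
    have : ∀ x : X, H (x : Completion X) = H' (x : Completion X) := fun x =>
      congrFun (congrArg Subtype.val hEq) x
    exact Subtype.ext (Completion.ext (nonexp_lipschitz h1).continuous
      (nonexp_lipschitz h2).continuous this)
  have hRsurj : Function.Surjective R := by
    rintro ⟨h, hh⟩
    have hne := (mem_closure_props x₀ hh).1
    refine ⟨⟨Completion.extension h, extend_mem h hh⟩, ?_⟩
    exact Subtype.ext (funext fun x => ext_coe hne x)
  -- compactness of T
  haveI : CompactSpace {H : Completion X → ℝ // H ∈ T} := by
    rw [← isCompact_iff_compactSpace]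
    have hsub : T ⊆ Set.pi Set.univ
        (fun a : Completion X => Set.Icc (-(dist a (x₀ : Completion X)))
          (dist a (x₀ : Completion X))) := by
      intro H hH
      have h1 := (hTprops H hH).1
      have h2 := (hTprops H hH).2
      intro a _
      have := h1 a (x₀ : Completion X)
      rw [h2] at this
      simpa using abs_le.mp (by simpa using this)
    exact IsCompact.of_isClosed_subset
      (isCompact_univ_pi fun a => isCompact_Icc) isClosed_closure hsub
  let F := hRc.homeoOfEquivCompactToT2 (f := Equiv.ofBijective R ⟨hRinj, hRsurj⟩)
  exact ⟨F.symm, fun H => rfl⟩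
end

section
/- Let X be a complete metric space with a weak conical bicombing and T : X → X an isometric embedding. Then there exists a metric functional h ∈ X̄ (a pointwise limit of functions d(·, y) − d(x₀, y)) such that h(Tx) = h(x) − d for all x ∈ X, where d = inf_x d(x, Tx). -/
open Filter Topology

/-- main fixed point theorem: Let `X` be a complete metric space
with a weak conical bicombing and `T : X → X` an isometric embedding. Then there
is a metric functional `h` (a pointwise limit of `h_y = d(·,y) - d(x₀,y)`) with
`h (T x) = h x - d` for all `x`, where `d = inf_x d(x, T x)`. -/
theorem exists_invariant_metric_functional
    {X : Type*} [MetricSpace X] [CompleteSpace X]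
    (σ : X → X → ℝ → X)
    (hstart : ∀ x y, σ x y 0 = x)
    (hend : ∀ x y, σ x y 1 = y)
    (hgeo : ∀ x y, ∀ s ∈ Set.Icc (0:ℝ) 1, ∀ t ∈ Set.Icc (0:ℝ) 1,
      dist (σ x y s) (σ x y t) = |s - t| * dist x y)
    (hcone : ∀ x y y', ∀ t ∈ Set.Icc (0:ℝ) 1,
      dist (σ x y t) (σ x y' t) ≤ t * dist y y')
    (T : X → X) (hT : Isometry T) (x₀ : X) :
    ∃ h : X → ℝ,
      h ∈ closure (Set.range fun y : X => fun x : X => dist x y - dist x₀ y) ∧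
      ∀ x : X, h (T x) = h x - ⨅ y : X, dist y (T y) := by
  have hne : Nonempty X := ⟨x₀⟩
  set d : ℝ := ⨅ y : X, dist y (T y) with hd
  have hbdd : BddBelow (Set.range fun y : X => dist y (T y)) :=
    ⟨0, by rintro _ ⟨y, rfl⟩; exact dist_nonneg⟩
  -- the sequence of contraction parameters
  set lam : ℕ → ℝ := fun n => 1 - ((n : ℝ) + 2)⁻¹ with hlam
  have hinvpos : ∀ n : ℕ, (0:ℝ) < ((n:ℝ) + 2)⁻¹ := fun n => by positivity
  have hlam0 : ∀ n, 0 < lam n := by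
    intro n
    have h2 : ((n:ℝ)+2)⁻¹ ≤ 2⁻¹ := by
      apply inv_anti₀ (by norm_num)
      have : (0:ℝ) ≤ (n:ℝ) := Nat.cast_nonneg n
      linarith
    simp only [hlam]; norm_num at h2 ⊢; linarith
  have hlam1 : ∀ n, lam n < 1 := by
    intro n
    have := hinvpos n
    simp only [hlam]; linarith
  have hIcc : ∀ n, lam n ∈ Set.Icc (0:ℝ) 1 := fun n => ⟨(hlam0 n).le, (hlam1 n).le⟩
  -- fixed points of the contractions
  have key : ∀ n : ℕ, ∃ z : X, σ x₀ (T z) (lam n) = z := by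
    intro n
    have hl0 := hlam0 n; have hl1 := hlam1 n
    have hlip : LipschitzWith (Real.toNNReal (lam n)) (fun z : X => σ x₀ (T z) (lam n)) := by
      apply LipschitzWith.of_dist_le_mul
      intro a b
      rw [Real.coe_toNNReal (lam n) hl0.le]
      calc dist (σ x₀ (T a) (lam n)) (σ x₀ (T b) (lam n))
          ≤ lam n * dist (T a) (T b) := hcone x₀ (T a) (T b) (lam n) (hIcc n)
        _ = lam n * dist a b := by rw [hT.dist_eq]
    have hc : ContractingWith (Real.toNNReal (lam n)) (fun z : X => σ x₀ (T z) (lam n)) := by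
      refine ⟨?_, hlip⟩
      rw [← NNReal.coe_lt_coe, Real.coe_toNNReal _ hl0.le, NNReal.coe_one]
      exact hl1
    exact ⟨hc.fixedPoint _, hc.fixedPoint_isFixedPt⟩
  choose z hz using key
  set D : ℕ → ℝ := fun n => dist x₀ (T (z n)) with hD
  set r : ℕ → ℝ := fun n => (1 - lam n) * D n with hr
  -- basic geodesic facts
  have hx0z : ∀ n, dist x₀ (z n) = lam n * D n := by
    intro n
    have h := hgeo x₀ (T (z n)) 0 ⟨le_refl 0, zero_le_one⟩ (lam n) (hIcc n)
    rw [hstart, hz n] at h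
    rw [h, abs_of_nonpos (by linarith [hlam0 n])]
    ring
  have hzTz : ∀ n, dist (z n) (T (z n)) = r n := by
    intro n
    have h := hgeo x₀ (T (z n)) (lam n) (hIcc n) 1 ⟨zero_le_one, le_refl 1⟩
    rw [hend, hz n] at h
    rw [h, abs_of_nonpos (by linarith [hlam1 n])]
    simp only [hr]; ring
  have hrd : ∀ n, d ≤ r n := by
    intro n
    rw [← hzTz n]
    exact ciInf_le hbdd (z n)
  -- upper bound for r in terms of an arbitrary point y
  have rUB : ∀ n (y : X), r n ≤ 2 * (1 - lam n) * dist x₀ (T y) + dist y (T y) := by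
    intro n y
    have hl' : (0:ℝ) ≤ 1 - lam n := by linarith [hlam1 n]
    have h1 : D n ≤ dist x₀ (T y) + dist (z n) y := by
      calc D n ≤ dist x₀ (T y) + dist (T y) (T (z n)) := dist_triangle _ _ _
        _ = dist x₀ (T y) + dist (z n) y := by rw [hT.dist_eq, dist_comm y (z n)]
    have h2a : dist (z n) (σ x₀ (T y) (lam n)) ≤ lam n * dist (z n) y := by
      calc dist (z n) (σ x₀ (T y) (lam n))
          = dist (σ x₀ (T (z n)) (lam n)) (σ x₀ (T y) (lam n)) := by rw [hz n]
        _ ≤ lam n * dist (T (z n)) (T y) := hcone _ _ _ _ (hIcc n)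
        _ = lam n * dist (z n) y := by rw [hT.dist_eq]
    have h2b : dist (σ x₀ (T y) (lam n)) (T y) = (1 - lam n) * dist x₀ (T y) := by
      have h := hgeo x₀ (T y) (lam n) (hIcc n) 1 ⟨zero_le_one, le_refl 1⟩
      rw [hend] at h
      rw [h, abs_of_nonpos (by linarith [hlam1 n])]
      ring
    have h2 : dist (z n) y ≤ lam n * dist (z n) y + (1 - lam n) * dist x₀ (T y)
        + dist y (T y) := by
      calc dist (z n) y ≤ dist (z n) (σ x₀ (T y) (lam n)) + dist (σ x₀ (T y) (lam n)) (T y)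
            + dist (T y) y := dist_triangle4 _ _ _ _
        _ ≤ _ := by rw [h2b, dist_comm (T y) y]; linarith [h2a]
    have h3 := mul_le_mul_of_nonneg_left h1 hl'
    have h4 : (1 - lam n) * dist (z n) y ≤ (1 - lam n) * dist x₀ (T y) + dist y (T y) := by
      nlinarith [h2]
    simp only [hr]
    nlinarith [h3, h4]
  -- limits
  have A : Tendsto (fun n : ℕ => 1 - lam n) atTop (𝓝 0) := by
    have : Tendsto (fun n : ℕ => ((n:ℝ) + 2)⁻¹) atTop (𝓝 0) :=
      tendsto_inv_atTop_zero.comp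
        (tendsto_atTop_add_const_right atTop 2 tendsto_natCast_atTop_atTop)
    simpa [hlam] using this
  have C : Tendsto lam atTop (𝓝 1) := by
    have := Filter.Tendsto.sub (tendsto_const_nhds : Tendsto (fun _ : ℕ => (1:ℝ)) atTop (𝓝 1)) A
    simpa using this
  have B : Tendsto r atTop (𝓝 d) := by
    rw [Metric.tendsto_atTop]
    intro ε hε
    obtain ⟨y, hy⟩ := exists_lt_of_ciInf_lt (show d < d + ε/2 by linarith)
    have hA2 : Tendsto (fun n : ℕ => 2 * (1 - lam n) * dist x₀ (T y)) atTop (𝓝 0) := by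
      have := (A.const_mul 2).mul_const (dist x₀ (T y))
      simpa [mul_assoc] using this
    obtain ⟨N, hN⟩ := Metric.tendsto_atTop.mp hA2 (ε/2) (by linarith)
    refine ⟨N, fun n hn => ?_⟩
    have h5 := hN n hn
    have hnn : (0:ℝ) ≤ 2 * (1 - lam n) * dist x₀ (T y) := by
      have : (0:ℝ) ≤ 1 - lam n := by linarith [hlam1 n]
      positivity
    rw [Real.dist_eq, sub_zero, abs_of_nonneg hnn] at h5
    have h6 := rUB n y
    rw [Real.dist_eq, abs_of_nonneg (by linarith [hrd n])]
    clear_value r D lam d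
    linarith [h5, h6, hy, hrd n]
  -- per-point limits
  have main : ∀ x : X, Tendsto (fun n => dist (T x) (z n) - dist x (z n)) atTop (𝓝 (-d)) := by
    intro x
    have Blow : Tendsto (fun n => -(r n)) atTop (𝓝 (-d)) := B.neg
    have Bup : Tendsto (fun n => (1 - lam n) * (dist x₀ (T x) + dist x₀ x) - lam n * r n)
        atTop (𝓝 (-d)) := by
      have := (A.mul_const (dist x₀ (T x) + dist x₀ x)).sub (C.mul B)
      simpa using this
    refine tendsto_of_tendsto_of_tendsto_of_le_of_le Blow Bup ?_ ?_
    · intro n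
      have h1 : dist x (z n) ≤ dist (T x) (z n) + r n := by
        calc dist x (z n) = dist (T x) (T (z n)) := (hT.dist_eq x (z n)).symm
          _ ≤ dist (T x) (z n) + dist (z n) (T (z n)) := dist_triangle _ _ _
          _ = dist (T x) (z n) + r n := by rw [hzTz n]
      simp only []
      linarith
    · intro n
      have hl' : (0:ℝ) ≤ 1 - lam n := by linarith [hlam1 n]
      have hTx : dist (T x) (σ x₀ (T x) (lam n)) = (1 - lam n) * dist x₀ (T x) := by
        have h := hgeo x₀ (T x) 1 ⟨zero_le_one, le_refl 1⟩ (lam n) (hIcc n)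
        rw [hend] at h
        rw [h, abs_of_nonneg (by linarith [hlam1 n])]
      have h5 : dist (σ x₀ (T x) (lam n)) (z n) ≤ lam n * dist x (z n) := by
        calc dist (σ x₀ (T x) (lam n)) (z n)
            = dist (σ x₀ (T x) (lam n)) (σ x₀ (T (z n)) (lam n)) := by rw [hz n]
          _ ≤ lam n * dist (T x) (T (z n)) := hcone _ _ _ _ (hIcc n)
          _ = lam n * dist x (z n) := by rw [hT.dist_eq]
      have h6 : dist (T x) (z n) ≤ (1 - lam n) * dist x₀ (T x) + lam n * dist x (z n) := by
        calc dist (T x) (z n) ≤ dist (T x) (σ x₀ (T x) (lam n)) + dist (σ x₀ (T x) (lam n)) (z n) :=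
              dist_triangle _ _ _
          _ ≤ _ := by rw [hTx]; linarith
      have h7 : lam n * D n - dist x₀ x ≤ dist x (z n) := by
        have := dist_triangle x₀ x (z n)
        rw [hx0z n] at this
        linarith
      have h8 := mul_le_mul_of_nonneg_left h7 hl'
      simp only [hr]
      nlinarith [h6, h8]
  -- compactness: extract a cluster point
  set u : ℕ → X → ℝ := fun n x => dist x (z n) - dist x₀ (z n) with hu
  set K : Set (X → ℝ) := Set.pi Set.univ (fun x => Set.Icc (-(dist x x₀)) (dist x x₀)) with hK
  have hKc : IsCompact K := isCompact_univ_pi fun x => isCompact_Icc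
  have huK : ∀ n, u n ∈ K := by
    intro n x _
    have habs := abs_dist_sub_le x x₀ (z n)
    rw [abs_le] at habs
    exact ⟨habs.1, habs.2⟩
  haveI : (Filter.map u Filter.atTop).NeBot := Filter.map_neBot
  have hFle : Filter.map u Filter.atTop ≤ 𝓟 K :=
    Filter.tendsto_principal.mpr (Filter.Eventually.of_forall huK)
  obtain ⟨h, -, hcl⟩ := hKc.exists_clusterPt hFle
  refine ⟨h, ?_, ?_⟩
  · rw [mem_closure_iff_clusterPt]
    refine hcl.mono ?_
    refine Filter.tendsto_principal.mpr (Filter.Eventually.of_forall fun n => ⟨z n, rfl⟩)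
  · intro x
    have hev : Continuous (fun g : X → ℝ => g (T x) - g x) :=
      (continuous_apply (T x)).sub (continuous_apply x)
    haveI hlNB : (𝓝 h ⊓ Filter.map u Filter.atTop).NeBot := hcl
    have t1 : Tendsto (fun g : X → ℝ => g (T x) - g x) (𝓝 h ⊓ Filter.map u Filter.atTop)
        (𝓝 (h (T x) - h x)) := (hev.tendsto h).mono_left inf_le_left
    have t2 : Tendsto (fun g : X → ℝ => g (T x) - g x) (𝓝 h ⊓ Filter.map u Filter.atTop)
        (𝓝 (-d)) := by
      refine Tendsto.mono_left ?_ inf_le_right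
      rw [Filter.tendsto_map'_iff]
      have heq : ((fun g : X → ℝ => g (T x) - g x) ∘ u)
          = fun n => dist (T x) (z n) - dist x (z n) := by
        funext n; simp only [hu, Function.comp]; ring
      rw [heq]
      exact main x
    have hequ := tendsto_nhds_unique t1 t2
    linarith
end

section
/- Let X be a metric space with a weak conical bicombing and T : X → X an isometric embedding such that inf_x d(x, Tx) > 0. Then for every x ∈ X, d(x, T^n x) → ∞ as n → ∞; in particular T has infinite order. -/
open Filter

set_option maxHeartbeats 1600000 in
/-- If `X` carries a weak conical bicombing and `T` is an isometric
embedding with `inf_x d(x, T x) > 0`, then `d(x, T^n x) → ∞` for every `x`; in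
particular `T` has infinite order. -/
theorem iterates_escape_to_infinity
    {X : Type*} [MetricSpace X]
    (σ : X → X → ℝ → X)
    (hstart : ∀ x y, σ x y 0 = x)
    (hend : ∀ x y, σ x y 1 = y)
    (hgeo : ∀ x y, ∀ s ∈ Set.Icc (0:ℝ) 1, ∀ t ∈ Set.Icc (0:ℝ) 1,
      dist (σ x y s) (σ x y t) = |s - t| * dist x y)
    (hcone : ∀ x y y', ∀ t ∈ Set.Icc (0:ℝ) 1,
      dist (σ x y t) (σ x y' t) ≤ t * dist y y')
    (T : X → X) (hT : Isometry T)
    (hd : 0 < ⨅ x : X, dist x (T x)) :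
    (∀ x : X, Tendsto (fun n : ℕ => dist x (T^[n] x)) atTop atTop) ∧
    (∀ (x : X) (n : ℕ), 0 < n → T^[n] x ≠ x) := by
  set D := ⨅ x : X, dist x (T x) with hDdef
  have hbdd : BddBelow (Set.range fun y : X => dist y (T y)) := by
    refine ⟨0, ?_⟩
    rintro _ ⟨z, rfl⟩
    exact dist_nonneg
  have hDle : ∀ y : X, D ≤ dist y (T y) := fun y => ciInf_le hbdd y
  -- The key quantitative estimate: `n * D ≤ dist x (T^[n] x)`.
  have key : ∀ (x : X) (n : ℕ), (n : ℝ) * D ≤ dist x (T^[n] x) := by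
    intro x n
    set a := dist x (T x) with hadef
    have ha0 : 0 < a := lt_of_lt_of_le hd (hDle x)
    -- step distances along the orbit
    have hstep : ∀ k : ℕ, dist (T^[k] x) (T^[k + 1] x) = a := by
      intro k
      induction k with
      | zero => simp [hadef]
      | succ k ih =>
        rw [Function.iterate_succ_apply' T k x, Function.iterate_succ_apply' T (k + 1) x]
        rw [hT.dist_eq]
        exact ih
    have horbit : ∀ k : ℕ, dist x (T^[k] x) ≤ (k : ℝ) * a := by
      intro k
      induction k with
      | zero => simp
      | succ k ih =>
        calc dist x (T^[k + 1] x) ≤ dist x (T^[k] x) + dist (T^[k] x) (T^[k + 1] x) :=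
              dist_triangle _ _ _
          _ ≤ (k : ℝ) * a + a := by rw [hstep k]; linarith
          _ = ((k + 1 : ℕ) : ℝ) * a := by push_cast; ring
    rcases Nat.eq_zero_or_pos n with rfl | hn
    · simpa using dist_nonneg
    -- it suffices to prove the bound up to an arbitrary ε > 0
    by_contra hcon
    push_neg at hcon
    set ε := (n : ℝ) * D - dist x (T^[n] x) with hεdef
    have hε : 0 < ε := by linarith
    -- choice of parameters
    have hn0 : (0 : ℝ) < (n : ℝ) := by exact_mod_cast hn
    set B := 3 * ((n : ℝ) + 1) * a with hBdef
    have hB : 0 < B := by positivity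
    have hnB : 0 < (n : ℝ) * B := by positivity
    set s := min (1 / 2 : ℝ) (ε / (2 * ((n : ℝ) * B))) with hsdef
    have hs0 : 0 < s := by
      apply lt_min (by norm_num)
      positivity
    have hs12 : s ≤ 1 / 2 := min_le_left _ _
    have hsB : s * ((n : ℝ) * B) ≤ ε / 2 := by
      have h1 : s ≤ ε / (2 * ((n : ℝ) * B)) := min_le_right _ _
      have := mul_le_mul_of_nonneg_right h1 (le_of_lt hnB)
      calc s * ((n : ℝ) * B) ≤ ε / (2 * ((n : ℝ) * B)) * ((n : ℝ) * B) := this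
        _ = ε / 2 := by field_simp
    set η := ε / (8 * (n : ℝ)) with hηdef
    have hη : 0 < η := by positivity
    set r := 1 - s with hrdef
    have hr : r ∈ Set.Icc (0 : ℝ) 1 := ⟨by linarith, by linarith⟩
    have hr1 : r < 1 := by linarith
    have hr0 : 0 ≤ r := hr.1
    -- convexity of distance functions along the combing geodesics from x
    have conv : ∀ p Z : X, dist (σ x p r) Z ≤ r * dist p Z + s * dist x Z := by
      intro p Z
      have h1 : dist (σ x p r) (σ x Z r) ≤ r * dist p Z := hcone x p Z r hr
      have h2 : dist (σ x Z r) Z = s * dist x Z := by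
        have h3 := hgeo x Z r hr 1 ⟨zero_le_one, le_refl 1⟩
        rw [hend] at h3
        rw [h3, abs_of_nonpos (by linarith : r - 1 ≤ 0), hrdef]
        ring
      calc dist (σ x p r) Z ≤ dist (σ x p r) (σ x Z r) + dist (σ x Z r) Z :=
            dist_triangle _ _ _
        _ ≤ r * dist p Z + s * dist x Z := by rw [h2]; linarith
    -- the contraction `F`
    set F : X → X := fun z => σ x (T z) r with hFdef
    have hFcontr : ∀ z z', dist (F z) (F z') ≤ r * dist z z' := by
      intro z z'
      have := hcone x (T z) (T z') r hr
      rwa [hT.dist_eq] at this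
    have hFiter : ∀ k : ℕ, dist (F^[k] x) (F^[k + 1] x) ≤ r ^ k * a := by
      intro k
      induction k with
      | zero =>
        have h1 := hgeo x (T x) 0 ⟨le_refl 0, zero_le_one⟩ r hr
        rw [hstart] at h1
        have h2 : dist x (σ x (T x) r) = r * a := by
          rw [h1, abs_of_nonpos (by linarith : (0 : ℝ) - r ≤ 0)]
          ring
        have h3 : F^[0] x = x := rfl
        have h4 : F^[0 + 1] x = σ x (T x) r := rfl
        rw [h3, h4, h2, pow_zero, one_mul]
        nlinarith
      | succ k ih =>
        rw [Function.iterate_succ_apply' F k x, Function.iterate_succ_apply' F (k + 1) x]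
        calc dist (F (F^[k] x)) (F (F^[k + 1] x)) ≤ r * dist (F^[k] x) (F^[k + 1] x) :=
              hFcontr _ _
          _ ≤ r * (r ^ k * a) := by
              exact mul_le_mul_of_nonneg_left ih hr0
          _ = r ^ (k + 1) * a := by ring
    -- an approximate fixed point of F
    obtain ⟨m, hm⟩ := exists_pow_lt_of_lt_one (x := η / a) (by positivity) hr1
    set w := F^[m] x with hwdef
    have hww : dist w (F w) ≤ η := by
      have h1 : dist w (F w) = dist (F^[m] x) (F^[m + 1] x) := by
        rw [Function.iterate_succ_apply' F m x]
      rw [h1]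
      calc dist (F^[m] x) (F^[m + 1] x) ≤ r ^ m * a := hFiter m
        _ ≤ η / a * a := by nlinarith [hm]
        _ = η := by field_simp
    -- the approximate fixed point is far from x : (★)
    have hstar : D - η - s * a ≤ s * dist x w := by
      have h1 : dist (F w) (T w) ≤ s * dist x (T w) := by
        have := conv (T w) (T w)
        simpa using this
      have h2 : dist x (T w) ≤ a + dist x w := by
        calc dist x (T w) ≤ dist x (T x) + dist (T x) (T w) := dist_triangle _ _ _
          _ = a + dist x w := by rw [hT.dist_eq]
      have h3 : dist w (T w) ≤ η + s * (a + dist x w) := by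
        calc dist w (T w) ≤ dist w (F w) + dist (F w) (T w) := dist_triangle _ _ _
          _ ≤ η + s * dist x (T w) := by linarith
          _ ≤ η + s * (a + dist x w) := by nlinarith
      have h4 := hDle w
      nlinarith
    -- one-step decay along the orbit
    have hdec : ∀ k : ℕ, k < n →
        dist (T^[k + 1] x) w ≤ dist (T^[k] x) w - (D - 2 * η - s * B) := by
      intro k hk
      set z := T^[k] x with hzdef
      have hTz : T z = T^[k + 1] x := (Function.iterate_succ_apply' T k x).symm
      have h1 : dist (T z) w ≤ r * dist w z + s * dist x (T z) + η := by
        have hconv : dist (F w) (T z) ≤ r * dist (T w) (T z) + s * dist x (T z) :=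
          conv (T w) (T z)
        have hiso : dist (T w) (T z) = dist w z := hT.dist_eq w z
        calc dist (T z) w ≤ dist (T z) (F w) + dist (F w) w := dist_triangle _ _ _
          _ = dist (F w) (T z) + dist w (F w) := by
              rw [dist_comm (T z) (F w), dist_comm (F w) w]
          _ ≤ (r * dist (T w) (T z) + s * dist x (T z)) + η := add_le_add hconv hww
          _ = r * dist w z + s * dist x (T z) + η := by rw [hiso]
      have h2 : dist x w - dist x z ≤ dist w z := by
        have := dist_triangle x z w
        rw [dist_comm z w] at this
        linarith
      have h3 : dist x (T z) ≤ ((n : ℝ) + 1) * a := by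
        rw [hTz]
        calc dist x (T^[k + 1] x) ≤ ((k + 1 : ℕ) : ℝ) * a := horbit (k + 1)
          _ ≤ ((n : ℝ) + 1) * a := by
              have : ((k + 1 : ℕ) : ℝ) ≤ (n : ℝ) + 1 := by
                push_cast
                have : (k : ℝ) ≤ (n : ℝ) := by exact_mod_cast hk.le
                linarith
              nlinarith
      have h4 : dist x z ≤ ((n : ℝ) + 1) * a := by
        rw [hzdef]
        calc dist x (T^[k] x) ≤ ((k : ℕ) : ℝ) * a := horbit k
          _ ≤ ((n : ℝ) + 1) * a := by
              have : ((k : ℕ) : ℝ) ≤ (n : ℝ) + 1 := by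
                have : (k : ℝ) ≤ (n : ℝ) := by exact_mod_cast hk.le
                linarith
              nlinarith
      have h5 : a ≤ ((n : ℝ) + 1) * a := by nlinarith
      -- combine
      have hr_eq : r = 1 - s := hrdef
      have htot : dist (T z) w ≤ dist z w + 2 * η + s * B - D := by
        have e1 : r * dist w z = dist w z - s * dist w z := by rw [hr_eq]; ring
        have e2 : s * dist w z ≥ s * (dist x w - dist x z) := by nlinarith
        have e3 : s * dist x w ≥ D - η - s * a := hstar
        have e4 : s * dist x (T z) ≤ s * (((n : ℝ) + 1) * a) := by nlinarith
        have e5 : s * dist x z ≤ s * (((n : ℝ) + 1) * a) := by nlinarith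
        have e6 : s * a ≤ s * (((n : ℝ) + 1) * a) := by nlinarith
        have e7 : dist w z = dist z w := dist_comm _ _
        have hBexp : s * B = 3 * (s * (((n : ℝ) + 1) * a)) := by rw [hBdef]; ring
        nlinarith [h1]
      rw [hTz] at htot
      rw [hzdef] at htot ⊢
      linarith
    -- telescoping
    have htel : ∀ k : ℕ, k ≤ n →
        dist (T^[k] x) w ≤ dist x w - (k : ℝ) * (D - 2 * η - s * B) := by
      intro k
      induction k with
      | zero => intro _; simp
      | succ k ih =>
        intro hk
        have hk' : k < n := hk
        have h1 := ih (Nat.le_of_succ_le hk)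
        have h2 := hdec k hk'
        calc dist (T^[k + 1] x) w ≤ dist (T^[k] x) w - (D - 2 * η - s * B) := h2
          _ ≤ dist x w - (k : ℝ) * (D - 2 * η - s * B) - (D - 2 * η - s * B) := by linarith
          _ = dist x w - ((k + 1 : ℕ) : ℝ) * (D - 2 * η - s * B) := by push_cast; ring
    have hfin := htel n le_rfl
    have htri : dist x w ≤ dist x (T^[n] x) + dist (T^[n] x) w := dist_triangle _ _ _
    have hnonneg : (0 : ℝ) ≤ dist (T^[n] x) w := dist_nonneg
    -- assemble the contradiction
    have hsum1 : (n : ℝ) * (2 * η) = ε / 4 := by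
      rw [hηdef]
      field_simp
      ring
    have hsum2 : (n : ℝ) * (s * B) ≤ ε / 2 := by
      calc (n : ℝ) * (s * B) = s * ((n : ℝ) * B) := by ring
        _ ≤ ε / 2 := hsB
    have hmain : (n : ℝ) * (D - 2 * η - s * B) ≤ dist x (T^[n] x) := by nlinarith
    have hfinal : (n : ℝ) * D ≤ dist x (T^[n] x) + ε / 4 + ε / 2 := by nlinarith
    have hεval : ε = (n : ℝ) * D - dist x (T^[n] x) := hεdef
    linarith
  constructor
  · intro x
    have h1 : Tendsto (fun n : ℕ => (n : ℝ) * D) atTop atTop :=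
      Tendsto.atTop_mul_const hd tendsto_natCast_atTop_atTop
    exact tendsto_atTop_mono (fun n => key x n) h1
  · intro x n hn h
    have h1 := key x n
    rw [h, dist_self] at h1
    have h2 : (0 : ℝ) < (n : ℝ) * D := by
      apply mul_pos _ hd
      exact_mod_cast hn
    linarith
end

section
/- Let U be a norm-preserving linear operator on a Banach space X and v ∈ X. Then the map T(x) = Ux + v is an isometric embedding of X, T^n(0) = Σ_{k=0}^{n−1} U^k v, and there exists a metric functional h of X such that (1/n)·h(Σ_{k=0}^{n−1} U^k v) = −inf_x ‖Ux + v − x‖ for all n ≥ 1. -/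
open Filter Topology Finset

section MeanErgodicAux

variable {E : Type*} [NormedAddCommGroup E] [NormedSpace ℝ E]

/-- The iterate formula for the affine map `x ↦ U x + v`. -/
private lemma me_iterate_formula (U : E →ₗ[ℝ] E) (v : E) (n : ℕ) (x : E) :
    (fun x : E => U x + v)^[n] x = (U ^ n) x + ∑ k ∈ Finset.range n, (U ^ k) v := by
  induction n with
  | zero => simp
  | succ n ih =>
      rw [Function.iterate_succ_apply', ih]
      have hpow : ∀ (k : ℕ) (w : E), U ((U ^ k) w) = (U ^ (k + 1)) w := by
        intro k w
        rw [pow_succ', Module.End.mul_apply]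
      rw [map_add, map_sum]
      rw [Finset.sum_range_succ' (fun k => (U ^ k) v) n]
      simp only [hpow, pow_zero, Module.End.one_apply]
      abel

private lemma me_isometry (U : E →ₗ[ℝ] E) (hU : ∀ x, ‖U x‖ = ‖x‖) (v : E) :
    Isometry (fun x : E => U x + v) := by
  apply Isometry.of_dist_eq
  intro a b
  simp only [dist_eq_norm]
  have : U a + v - (U b + v) = U (a - b) := by rw [map_sub]; abel
  rw [this, hU]

private lemma me_iter_norm_eq (U : E →ₗ[ℝ] E) (hU : ∀ x, ‖U x‖ = ‖x‖) (v : E)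
    (n : ℕ) (a b : E) :
    ‖(fun x : E => U x + v)^[n] a - (fun x : E => U x + v)^[n] b‖ = ‖a - b‖ := by
  induction n generalizing a b with
  | zero => simp
  | succ n ih =>
      rw [Function.iterate_succ_apply, Function.iterate_succ_apply]
      rw [ih]
      have h1 : (fun x : E => U x + v) a - (fun x : E => U x + v) b = U (a - b) := by
        simp only [map_sub]
        abel
      rw [h1, hU]

/-- Lower bound on the displacement of iterates: `k·d ≤ ‖T^[k] x - x‖`. -/
private lemma me_drift_lb (U : E →ₗ[ℝ] E) (v : E) (k : ℕ) (x : E) :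
    (k : ℝ) * (⨅ y : E, ‖U y + v - y‖) ≤ ‖(fun x : E => U x + v)^[k] x - x‖ := by
  set T : E → E := fun x => U x + v with hT
  set d : ℝ := ⨅ y : E, ‖U y + v - y‖ with hd
  have bdd : BddBelow (Set.range fun y : E => ‖U y + v - y‖) := by
    refine ⟨0, ?_⟩
    rintro r ⟨y, rfl⟩
    positivity
  rcases Nat.eq_zero_or_pos k with hk | hk
  · subst hk
    simp [norm_nonneg]
  · have hk0 : ((k : ℝ)) ≠ 0 := by positivity
    set z : E := (k : ℝ)⁻¹ • ∑ j ∈ Finset.range k, T^[j] x with hz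
    have inner : U (∑ j ∈ Finset.range k, T^[j] x) + (k : ℝ) • v
        - ∑ j ∈ Finset.range k, T^[j] x = T^[k] x - x := by
      have hv : (k : ℝ) • v = ∑ _j ∈ Finset.range k, v := by
        rw [Finset.sum_const, Finset.card_range, Nat.cast_smul_eq_nsmul]
      rw [map_sum, hv, ← Finset.sum_add_distrib, ← Finset.sum_sub_distrib]
      have : ∀ j ∈ Finset.range k, U (T^[j] x) + v - T^[j] x
          = T^[j+1] x - T^[j] x := by
        intro j _
        rw [Function.iterate_succ_apply']
      rw [Finset.sum_congr rfl this, Finset.sum_range_sub (fun j => T^[j] x) k]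
      simp
    have key : U z + v - z = (k : ℝ)⁻¹ • (T^[k] x - x) := by
      rw [hz, map_smul, ← inner]
      rw [smul_sub, smul_add, smul_smul, inv_mul_cancel₀ hk0, one_smul]
    have hle : d ≤ ‖U z + v - z‖ := ciInf_le bdd z
    rw [key, norm_smul] at hle
    have habs : ‖(k : ℝ)⁻¹‖ = (k : ℝ)⁻¹ := by
      rw [Real.norm_eq_abs, abs_of_pos (by positivity)]
    rw [habs] at hle
    have := mul_le_mul_of_nonneg_left hle (le_of_lt (show (0:ℝ) < k by positivity))
    calc (k : ℝ) * d ≤ (k : ℝ) * ((k : ℝ)⁻¹ * ‖T^[k] x - x‖) := this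
      _ = ‖T^[k] x - x‖ := by field_simp

/-- Norm growth of iterates: `‖T^[a+n] x‖ ≤ ‖T^[a] x‖ + n·‖T x - x‖`. -/
private lemma me_iter_norm_growth (U : E →ₗ[ℝ] E) (hU : ∀ x, ‖U x‖ = ‖x‖) (v : E)
    (x : E) (a n : ℕ) :
    ‖(fun x : E => U x + v)^[a + n] x‖
      ≤ ‖(fun x : E => U x + v)^[a] x‖ + n * ‖U x + v - x‖ := by
  set T : E → E := fun x => U x + v with hT
  induction n with
  | zero => simp
  | succ n ih =>
      have hstep : ‖T^[a + n + 1] x - T^[a + n] x‖ = ‖U x + v - x‖ := by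
        have : T^[a + n + 1] x = T^[a + n] (T x) := by
          rw [← Function.iterate_succ_apply]
        rw [this]
        exact me_iter_norm_eq U hU v (a + n) (T x) x
      have htri : ‖T^[a + n + 1] x‖ ≤ ‖T^[a + n] x‖ + ‖T^[a + n + 1] x - T^[a + n] x‖ := by
        have := norm_add_le (T^[a + n] x) (T^[a + n + 1] x - T^[a + n] x)
        simpa using this
      have : a + (n + 1) = a + n + 1 := by omega
      rw [this]
      push_cast
      rw [hstep] at htri
      nlinarith [norm_nonneg (U x + v - x), ih]

/-- Descent lemma: a sequence bounded below has points `m ≥ N` from which one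
cannot descend by more than `δ` by stepping back at most `N` steps. -/
private lemma me_descent (φ : ℕ → ℝ) (C : ℝ) (hlb : ∀ k, -C ≤ φ k)
    {δ : ℝ} (hδ : 0 < δ) (N : ℕ) (hN : 0 < N) :
    ∃ m, N ≤ m ∧ ∀ n ≤ N, φ (m - n) - δ ≤ φ m := by
  by_contra hcon
  push_neg at hcon
  -- from every m ≥ N we can step back by some 1 ≤ n ≤ N and gain more than δ
  have H : ∀ m, N ≤ m → ∃ n, n ≤ N ∧ 1 ≤ n ∧ φ m < φ (m - n) - δ := by
    intro m hm
    obtain ⟨n, hn, hlt⟩ := hcon m hm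
    refine ⟨n, hn, ?_, hlt⟩
    by_contra h0
    have : n = 0 := by omega
    subst this
    simp at hlt
    linarith
  -- strong induction: from any m, some k < N is above φ m by δ·(m-k)/N
  have Q : ∀ m : ℕ, ∃ k, k < N ∧ k ≤ m ∧ φ m + δ * ((m - k : ℕ) : ℝ) / N ≤ φ k := by
    intro m
    induction m using Nat.strong_induction_on with
    | _ m ih =>
      by_cases hm : m < N
      · exact ⟨m, hm, le_rfl, by simp⟩
      · push_neg at hm
        obtain ⟨n, hnN, hn1, hstep⟩ := H m hm
        obtain ⟨k, hkN, hkm, hQ⟩ := ih (m - n) (by omega)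
        refine ⟨k, hkN, by omega, ?_⟩
        have hcast : ((m - k : ℕ) : ℝ) = ((m - n - k : ℕ) : ℝ) + (n : ℝ) := by
          push_cast [Nat.cast_sub (show k ≤ m by omega), Nat.cast_sub (show k ≤ m - n by omega),
            Nat.cast_sub (show n ≤ m by omega)]
          ring
        have hNpos : (0:ℝ) < N := by positivity
        have hfrac : δ * (n : ℝ) / N ≤ δ := by
          rw [div_le_iff₀ hNpos]
          have : (n : ℝ) ≤ N := by exact_mod_cast hnN
          nlinarith
        have : φ m + δ * ((m - k : ℕ) : ℝ) / N
            = φ m + δ * ((m - n - k : ℕ) : ℝ) / N + δ * (n : ℝ) / N := by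
          rw [hcast]; ring
        rw [this]
        have h1 : φ m + δ * (n:ℝ) / N ≤ φ m + δ := by linarith
        linarith [hQ]
  -- contradiction for large m
  have hNe : (Finset.range N).Nonempty := ⟨0, Finset.mem_range.mpr hN⟩
  set K : ℝ := (Finset.range N).sup' hNe φ with hK
  have hKb : ∀ k < N, φ k ≤ K := fun k hk =>
    Finset.le_sup' φ (Finset.mem_range.mpr hk)
  obtain ⟨m, hm⟩ := exists_nat_gt ((N : ℝ) + N * (K + C + 1) / δ)
  obtain ⟨k, hkN, hkm, hQ⟩ := Q m
  have hφm := hlb m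
  have hφk := hKb k hkN
  have hNpos : (0:ℝ) < N := by positivity
  have hmk : ((m - k : ℕ) : ℝ) ≥ (m : ℝ) - N := by
    rw [Nat.cast_sub hkm]
    have : (k : ℝ) ≤ N := by
      have : (k:ℝ) < N := by exact_mod_cast hkN
      linarith
    linarith
  have hbig : δ * ((m - k : ℕ) : ℝ) / N > K + C + 1 := by
    rw [gt_iff_lt, lt_div_iff₀ hNpos]
    have h1 : ((m:ℝ) - N) > N * (K + C + 1) / δ := by
      have := hm
      have h2 : (N:ℝ) * (K + C + 1) / δ < (m:ℝ) - N := by linarith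
      linarith
    have h3 : δ * ((m:ℝ) - N) > N * (K + C + 1) := by
      have h4 := (div_lt_iff₀ hδ).mp h1
      nlinarith
    calc (K + C + 1) * N = N * (K + C + 1) := by ring
      _ < δ * ((m:ℝ) - N) := h3
      _ ≤ δ * ((m - k : ℕ) : ℝ) := by nlinarith
  linarith

end MeanErgodicAux

/-- Mean ergodic theorem in Banach spaces: For a norm-preserving
linear operator `U` on a Banach space `E` and `v ∈ E`, the map `T x = U x + v`
is an isometric embedding with `T^n 0 = Σ_{k<n} U^k v`, and there is a metric
functional `h` with `(1/n)·h(Σ_{k<n} U^k v) = -inf_x ‖U x + v - x‖` for `n ≥ 1`. -/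
theorem mean_ergodic_metric_functional
    {E : Type*} [NormedAddCommGroup E] [NormedSpace ℝ E] [CompleteSpace E]
    (U : E →ₗ[ℝ] E) (hU : ∀ x, ‖U x‖ = ‖x‖) (v : E) :
    Isometry (fun x : E => U x + v) ∧
    (∀ n : ℕ, (fun x : E => U x + v)^[n] 0 = ∑ k ∈ Finset.range n, (U ^ k) v) ∧
    ∃ h : E → ℝ,
      h ∈ closure (Set.range fun y : E => fun x : E => ‖x - y‖ - ‖y‖) ∧
      ∀ n : ℕ, 1 ≤ n →
        (1 / (n : ℝ)) * h (∑ k ∈ Finset.range n, (U ^ k) v) =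
          -(⨅ x : E, ‖U x + v - x‖) := by
  classical
  set T : E → E := fun x => U x + v with hT
  set d : ℝ := ⨅ x : E, ‖U x + v - x‖ with hd
  set S : ℕ → E := fun n => ∑ k ∈ Finset.range n, (U ^ k) v with hS
  have hiter0 : ∀ n : ℕ, T^[n] 0 = S n := by
    intro n
    rw [hS]
    simpa using me_iterate_formula U v n 0
  refine ⟨me_isometry U hU v, hiter0, ?_⟩
  -- near-minimizers of displacement
  have hmin : ∀ j : ℕ, ∃ x : E, ‖U x + v - x‖ < d + 1 / (j + 1) := by
    intro j
    apply exists_lt_of_ciInf_lt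
    have : (0:ℝ) < 1 / ((j:ℝ) + 1) := by positivity
    rw [← hd]
    linarith
  choose xs hxs using hmin
  -- φ j k = ‖T^[k] (xs j)‖ - k d, bounded below, controlled increments
  set φ : ℕ → ℕ → ℝ := fun j k => ‖T^[k] (xs j)‖ - k * d with hφ
  have hφ_lb : ∀ j k, -‖xs j‖ ≤ φ j k := by
    intro j k
    have h1 := me_drift_lb U v k (xs j)
    rw [← hd] at h1
    have h2 : ‖T^[k] (xs j) - xs j‖ ≤ ‖T^[k] (xs j)‖ + ‖xs j‖ := norm_sub_le _ _
    simp only [hφ]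
    have : T^[k] (xs j) = (fun x : E => U x + v)^[k] (xs j) := rfl
    rw [this]
    rw [this] at h2
    linarith
  have hφ_step : ∀ j m n, n ≤ m → φ j m ≤ φ j (m - n) + n * (1 / (j + 1)) := by
    intro j m n hnm
    have h1 := me_iter_norm_growth U hU v (xs j) (m - n) n
    have hmn : m - n + n = m := by omega
    rw [hmn] at h1
    have h2 : ‖U (xs j) + v - xs j‖ < d + 1 / (j + 1) := hxs j
    have hcast : ((m - n : ℕ) : ℝ) = (m : ℝ) - n := by
      rw [Nat.cast_sub hnm]
    simp only [hφ]
    have hd0 : 0 ≤ d := by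
      rw [hd]
      apply le_ciInf
      intro x
      positivity
    have h3 : (n:ℝ) * ‖U (xs j) + v - xs j‖ ≤ (n:ℝ) * (d + 1 / (j + 1)) := by
      apply mul_le_mul_of_nonneg_left (le_of_lt h2) (by positivity)
    have h4 : ‖(fun x : E => U x + v)^[m] (xs j)‖
        ≤ ‖(fun x : E => U x + v)^[m - n] (xs j)‖ + (n:ℝ) * (d + 1 / (j + 1)) := by
      calc ‖(fun x : E => U x + v)^[m] (xs j)‖
          ≤ ‖(fun x : E => U x + v)^[m - n] (xs j)‖ + (n:ℝ) * ‖U (xs j) + v - xs j‖ := h1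
        _ ≤ _ := by linarith
    have : T^[m] (xs j) = (fun x : E => U x + v)^[m] (xs j) := rfl
    rw [this]
    have : T^[m - n] (xs j) = (fun x : E => U x + v)^[m - n] (xs j) := rfl
    rw [this, hcast]
    nlinarith
  -- good times from the descent lemma
  have hdes : ∀ j : ℕ, ∃ m, j + 1 ≤ m ∧ ∀ n ≤ j + 1, φ j (m - n) - 1 / (j + 1) ≤ φ j m := by
    intro j
    exact me_descent (φ j) ‖xs j‖ (hφ_lb j) (by positivity) (j + 1) (by omega)
  choose ms hms1 hms2 using hdes
  set y : ℕ → E := fun j => T^[ms j] (xs j) with hy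
  set F : ℕ → E → ℝ := fun j x => ‖x - y j‖ - ‖y j‖ with hF
  -- key estimate
  have key : ∀ n j : ℕ, n ≤ j + 1 →
      |F j (S n) + n * d| ≤ (n + 1) * (1 / (j + 1)) := by
    intro n j hnj
    have hnm : n ≤ ms j := le_trans hnj (hms1 j)
    -- ‖S n - y j‖ = ‖T^[ms j - n] (xs j)‖
    have hid : ‖S n - y j‖ = ‖T^[ms j - n] (xs j)‖ := by
      have h1 : T^[ms j] (xs j) = T^[n] (T^[ms j - n] (xs j)) := by
        rw [← Function.iterate_add_apply]
        congr 1
        omega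
      rw [hy]
      simp only
      rw [h1, ← hiter0 n]
      have := me_iter_norm_eq U hU v n 0 (T^[ms j - n] (xs j))
      have h0 : T^[n] (0:E) = (fun x : E => U x + v)^[n] 0 := rfl
      calc ‖T^[n] (0:E) - T^[n] (T^[ms j - n] (xs j))‖
          = ‖(0:E) - T^[ms j - n] (xs j)‖ := this
        _ = ‖T^[ms j - n] (xs j)‖ := by rw [zero_sub, norm_neg]
    have hFval : F j (S n) = φ j (ms j - n) - φ j (ms j) - n * d := by
      simp only [hF, hφ]
      rw [hid]
      have hcast : ((ms j - n : ℕ) : ℝ) = (ms j : ℝ) - n := Nat.cast_sub hnm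
      have : ‖y j‖ = ‖T^[ms j] (xs j)‖ := rfl
      rw [this, hcast]
      ring
    rw [hFval]
    have hup : φ j (ms j - n) - φ j (ms j) ≤ 1 / (j + 1) := by
      have := hms2 j n hnj
      linarith
    have hlo : φ j (ms j) ≤ φ j (ms j - n) + n * (1 / (j + 1)) := hφ_step j (ms j) n hnm
    rw [abs_le]
    constructor
    · have : -(n * (1 / ((j:ℝ) + 1))) ≤ φ j (ms j - n) - φ j (ms j) := by linarith
      have hpos : (0:ℝ) ≤ 1 / ((j:ℝ) + 1) := by positivity
      nlinarith
    · have hpos : (0:ℝ) ≤ (n:ℝ) * (1 / ((j:ℝ) + 1)) := by positivity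
      nlinarith
  -- tendsto along atTop
  have hto : ∀ n : ℕ, Tendsto (fun j => F j (S n)) atTop (𝓝 (-(n * d))) := by
    intro n
    have hz : Tendsto (fun j : ℕ => ((n:ℝ) + 1) * (1 / ((j:ℝ) + 1))) atTop (𝓝 0) := by
      have := (tendsto_one_div_add_atTop_nhds_zero_nat : Tendsto (fun n : ℕ => 1 / ((n : ℝ) + 1)) atTop (𝓝 0))
      have h2 := this.const_mul ((n:ℝ) + 1)
      simpa using h2
    have hg : Tendsto (fun j : ℕ => -((n:ℝ) * d) - ((n:ℝ) + 1) * (1 / ((j:ℝ) + 1)))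
        atTop (𝓝 (-(n * d))) := by
      have := (tendsto_const_nhds (x := -((n:ℝ) * d)) (f := atTop (α := ℕ))).sub hz
      simpa using this
    have hh : Tendsto (fun j : ℕ => -((n:ℝ) * d) + ((n:ℝ) + 1) * (1 / ((j:ℝ) + 1)))
        atTop (𝓝 (-(n * d))) := by
      have := (tendsto_const_nhds (x := -((n:ℝ) * d)) (f := atTop (α := ℕ))).add hz
      simpa using this
    apply tendsto_of_tendsto_of_tendsto_of_le_of_le' hg hh
    · filter_upwards [eventually_ge_atTop n] with j hj
      have := key n j (by omega)
      rw [abs_le] at this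
      linarith [this.1]
    · filter_upwards [eventually_ge_atTop n] with j hj
      have := key n j (by omega)
      rw [abs_le] at this
      linarith [this.2]
  -- ultrafilter limit
  set 𝒰 : Ultrafilter ℕ := Ultrafilter.of atTop with h𝒰def
  have h𝒰 : (𝒰 : Filter ℕ) ≤ atTop := Ultrafilter.of_le atTop
  have hbF : ∀ (x : E) (j : ℕ), F j x ∈ Set.Icc (-‖x‖) ‖x‖ := by
    intro x j
    constructor
    · have h1 : ‖y j‖ ≤ ‖x‖ + ‖x - y j‖ := by
        have := norm_sub_le x (x - y j)
        simpa using this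
      simp only [hF]
      linarith
    · have h2 : ‖x - y j‖ ≤ ‖x‖ + ‖y j‖ := norm_sub_le _ _
      simp only [hF]
      linarith
  have hlim : ∀ x : E, ∃ L : ℝ, Tendsto (fun j => F j x) 𝒰 (𝓝 L) := by
    intro x
    have hsub : (𝒰.map fun j => F j x : Filter ℝ) ≤ 𝓟 (Set.Icc (-‖x‖) ‖x‖) := by
      rw [Ultrafilter.coe_map, le_principal_iff, Filter.mem_map]
      apply univ_mem'
      intro j
      exact hbF x j
    obtain ⟨L, _, hle⟩ := (isCompact_Icc (a := -‖x‖) (b := ‖x‖)).ultrafilter_le_nhds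
      (𝒰.map fun j => F j x) hsub
    refine ⟨L, ?_⟩
    rw [Filter.Tendsto]
    rw [Ultrafilter.coe_map] at hle
    exact hle
  choose h htend using hlim
  refine ⟨h, ?_, ?_⟩
  · have hFt : Tendsto F 𝒰 (𝓝 h) := tendsto_pi_nhds.mpr htend
    apply mem_closure_of_tendsto hFt
    apply Eventually.of_forall
    intro j
    exact ⟨y j, rfl⟩
  · intro n hn
    have h1 : Tendsto (fun j => F j (S n)) 𝒰 (𝓝 (-(n * d))) := (hto n).mono_left h𝒰
    have h2 : h (S n) = -(n * d) := tendsto_nhds_unique (htend (S n)) h1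
    have hSn : (∑ k ∈ Finset.range n, (U ^ k) v) = S n := rfl
    rw [hSn, h2]
    have hn0 : (n : ℝ) ≠ 0 := by
      have : 0 < n := hn
      positivity
    field_simp
end

section
/- Let U be a unitary operator of a Hilbert space H and v ∈ H. Then (1/n)·Σ_{k=0}^{n−1} U^k v converges strongly to π_U(v), the orthogonal projection of v onto the closed subspace of U-invariant vectors. -/
open Filter

set_option maxHeartbeats 1000000 in
set_option synthInstance.maxHeartbeats 400000 in
/-- von Neumann mean ergodic theorem: For a unitary operator `U`
of a complex Hilbert space `H` and `v ∈ H`, the averages `(1/n)·Σ_{k<n} U^k v`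
converge strongly to the orthogonal projection of `v` onto the `U`-invariant
vectors. -/
theorem von_neumann_mean_ergodic
    {H : Type*} [NormedAddCommGroup H] [InnerProductSpace ℂ H] [CompleteSpace H]
    (U : H ≃ₗᵢ[ℂ] H) (v : H) :
    ∃ w : H, U w = w ∧ (∀ u : H, U u = u → (inner ℂ (v - w) u : ℂ) = 0) ∧
      Tendsto (fun n : ℕ => (n : ℂ)⁻¹ • ∑ k ∈ Finset.range n, (U ^ k) v)
        atTop (nhds w) := by
  set f : H →L[ℂ] H := (U.toLinearIsometry.toContinuousLinearMap)
  have hf : ‖f‖ ≤ 1 := U.toLinearIsometry.norm_toContinuousLinearMap_le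
  set K := LinearMap.eqLocus (f : H →ₗ[ℂ] H) ((1 : H →L[ℂ] H) : H →ₗ[ℂ] H)
  refine ⟨Submodule.orthogonalProjection K v, ?_, ?_, ?_⟩
  · exact (Submodule.orthogonalProjection K v).2
  · intro u hu
    have hmem : (v - Submodule.orthogonalProjection K v) ∈ Kᗮ :=
      K.sub_starProjection_mem_orthogonal v
    have : (inner ℂ u (v - (Submodule.orthogonalProjection K v : H)) : ℂ) = 0 :=
      (Submodule.mem_orthogonal K _).1 hmem u hu
    rw [← inner_conj_symm, this, map_zero]
  · have h := ContinuousLinearMap.tendsto_birkhoffAverage_orthogonalProjection f hf v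
    have key : ∀ k, f^[k] v = (U ^ k) v := by
      intro k
      induction k with
      | zero => simp
      | succ k ih =>
        rw [Function.iterate_succ_apply', ih, pow_succ']
        rfl
    convert h using 2 with n
    simp [birkhoffAverage, birkhoffSum, key]
end

section
/- Let T be an affine isometry of a nonempty bounded closed convex subset C of a reflexive Banach space such that inf_{x∈C} ‖x − Tx‖ = 0. Then T has a fixed point in C. -/
open NormedSpace Set Filter Bornology

private lemma aux_incl_inj {E : Type*} [NormedAddCommGroup E] [NormedSpace ℝ E] :
    Function.Injective (NormedSpace.inclusionInDoubleDual ℝ E) := by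
  intro x y h
  have : inclusionInDoubleDualLi ℝ (E := E) x = inclusionInDoubleDualLi ℝ (E := E) y := h
  exact (inclusionInDoubleDualLi ℝ (E := E)).injective this

/-- In a reflexive space, a decreasing sequence of nonempty bounded closed convex sets
has nonempty intersection. -/
private lemma aux_inter_nonempty {E : Type*} [NormedAddCommGroup E] [NormedSpace ℝ E]
    [CompleteSpace E]
    (hrefl : Function.Surjective (NormedSpace.inclusionInDoubleDual ℝ E))
    (F : ℕ → Set E) (hmono : ∀ n, F (n + 1) ⊆ F n)
    (hne : ∀ n, (F n).Nonempty) (hb : ∀ n, Bornology.IsBounded (F n))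
    (hc : ∀ n, IsClosed (F n)) (hconv : ∀ n, Convex ℝ (F n)) :
    (⋂ n, F n).Nonempty := by
  classical
  set ι : E → StrongDual ℝ (StrongDual ℝ E) := fun x => inclusionInDoubleDual ℝ E x with hι
  set j : E → WeakDual ℝ (StrongDual ℝ E) := fun x => StrongDual.toWeakDual (ι x) with hj
  have hjinj : Function.Injective j := by
    intro x y h
    exact aux_incl_inj (StrongDual.toWeakDual.injective h)
  -- images are weak-* closed
  have hGclosed : ∀ n, IsClosed (j '' F n) := by
    intro n
    rw [← isOpen_compl_iff, isOpen_iff_mem_nhds]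
    intro z hz
    obtain ⟨x, hx⟩ := hrefl (WeakDual.toStrongDual z)
    have hzx : j x = z := by
      simp only [hj, hι, hx]
      exact StrongDual.toWeakDual.apply_symm_apply z
    have hxF : x ∉ F n := by
      intro hmem
      exact hz ⟨x, hmem, hzx⟩
    obtain ⟨f, u, hfu, hux⟩ := geometric_hahn_banach_closed_point (hconv n) (hc n) hxF
    have hopen : IsOpen {w : WeakDual ℝ (StrongDual ℝ E) | u < w f} :=
      isOpen_Ioi.preimage (WeakDual.eval_continuous f)
    have hzU : z ∈ {w : WeakDual ℝ (StrongDual ℝ E) | u < w f} := by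
      rw [← hzx]
      simpa [hj, hι] using hux
    refine Filter.mem_of_superset (hopen.mem_nhds hzU) ?_
    rintro w hw ⟨a, haF, rfl⟩
    exact absurd (hfu a haF) (not_lt.2 (le_of_lt hw))
  -- images are compact
  have hGcompact : ∀ n, IsCompact (j '' F n) := by
    intro n
    apply WeakDual.isCompact_of_bounded_of_closed _ (hGclosed n)
    have hpre : StrongDual.toWeakDual ⁻¹' (j '' F n) = ι '' F n := by
      ext p
      constructor
      · rintro ⟨a, haF, ha⟩
        exact ⟨a, haF, StrongDual.toWeakDual.injective ha⟩
      · rintro ⟨a, haF, ha⟩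
        exact ⟨a, haF, show StrongDual.toWeakDual (ι a) = StrongDual.toWeakDual p from by rw [ha]⟩
    rw [← WeakDual.isBounded_toWeakDual_preimage_iff_isBounded, hpre]
    have : Isometry ι := (inclusionInDoubleDualLi ℝ (E := E)).isometry
    exact (this.lipschitz.isBounded_image (hb n))
  have hGne : ∀ n, (j '' F n).Nonempty := fun n => (hne n).image j
  have hGmono : ∀ n, j '' F (n + 1) ⊆ j '' F n := fun n => Set.image_mono (hmono n)
  obtain ⟨z, hz⟩ := IsCompact.nonempty_iInter_of_sequence_nonempty_isCompact_isClosed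
    (fun n => j '' F n) hGmono hGne (hGcompact 0) (fun n => hGclosed n)
  obtain ⟨x0, hx0, hx0z⟩ := (Set.mem_iInter.1 hz) 0
  refine ⟨x0, Set.mem_iInter.2 fun n => ?_⟩
  obtain ⟨a, haF, haz⟩ := (Set.mem_iInter.1 hz) n
  have : a = x0 := hjinj (by rw [haz, hx0z])
  rwa [this] at haF

/-- Let `T` be an affine isometry of a nonempty bounded closed convex
subset `C` of a reflexive Banach space (reflexivity stated as surjectivity of the
canonical inclusion into the double dual) with `inf_{x ∈ C} ‖x - T x‖ = 0`.
Then `T` has a fixed point in `C`. -/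
theorem affine_isometry_fixed_point_of_reflexive
    {E : Type*} [NormedAddCommGroup E] [NormedSpace ℝ E] [CompleteSpace E]
    (hrefl : Function.Surjective (NormedSpace.inclusionInDoubleDual ℝ E))
    (C : Set E) (hCne : C.Nonempty) (hCb : Bornology.IsBounded C)
    (hCc : IsClosed C) (hCconv : Convex ℝ C)
    (T : E → E) (hTC : Set.MapsTo T C C)
    (hTiso : ∀ x ∈ C, ∀ y ∈ C, ‖T x - T y‖ = ‖x - y‖)
    (hTaff : ∀ x ∈ C, ∀ y ∈ C, ∀ t ∈ Set.Icc (0:ℝ) 1,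
      T (t • x + (1 - t) • y) = t • T x + (1 - t) • T y)
    (hinf : sInf ((fun x => ‖x - T x‖) '' C) = 0) :
    ∃ x ∈ C, T x = x := by
  classical
  set ε : ℕ → ℝ := fun n => 1 / ((n : ℝ) + 1) with hε
  have hεpos : ∀ n, 0 < ε n := fun n => by positivity
  set F : ℕ → Set E := fun n => {x ∈ C | ‖x - T x‖ ≤ ε n} with hF
  have hmono : ∀ n, F (n + 1) ⊆ F n := by
    intro n x hx
    refine ⟨hx.1, hx.2.trans ?_⟩
    apply one_div_le_one_div_of_le (by positivity)
    push_cast; linarith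
  have hne : ∀ n, (F n).Nonempty := by
    intro n
    have hSne : ((fun x => ‖x - T x‖) '' C).Nonempty := hCne.image _
    have hbdd : BddBelow ((fun x => ‖x - T x‖) '' C) := by
      refine ⟨0, ?_⟩
      rintro y ⟨x, _, rfl⟩
      exact norm_nonneg _
    have : sInf ((fun x => ‖x - T x‖) '' C) < ε n := by rw [hinf]; exact hεpos n
    obtain ⟨y, ⟨x, hxC, rfl⟩, hy⟩ := (csInf_lt_iff hbdd hSne).1 this
    exact ⟨x, hxC, le_of_lt hy⟩
  have hb : ∀ n, Bornology.IsBounded (F n) := fun n => hCb.subset fun x hx => hx.1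
  have hc : ∀ n, IsClosed (F n) := by
    intro n
    refine IsSeqClosed.isClosed ?_
    intro u p hu hup
    have hpC : p ∈ C := hCc.isSeqClosed (fun k => (hu k).1) hup
    have hkey : ∀ k, ‖p - T p‖ ≤ ε n + 2 * ‖u k - p‖ := by
      intro k
      have h1 : ‖p - T p‖ ≤ ‖p - u k‖ + ‖u k - T (u k)‖ + ‖T (u k) - T p‖ := by
        have := norm_sub_le_norm_sub_add_norm_sub (p) (u k) (T p)
        calc ‖p - T p‖ ≤ ‖p - u k‖ + ‖u k - T p‖ := norm_sub_le_norm_sub_add_norm_sub _ _ _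
          _ ≤ ‖p - u k‖ + (‖u k - T (u k)‖ + ‖T (u k) - T p‖) := by
              gcongr; exact norm_sub_le_norm_sub_add_norm_sub _ _ _
          _ = _ := by ring
      have h2 : ‖T (u k) - T p‖ = ‖u k - p‖ := hTiso _ (hu k).1 _ hpC
      have h3 : ‖p - u k‖ = ‖u k - p‖ := norm_sub_rev _ _
      calc ‖p - T p‖ ≤ ‖p - u k‖ + ‖u k - T (u k)‖ + ‖T (u k) - T p‖ := h1
        _ ≤ ‖u k - p‖ + ε n + ‖u k - p‖ := by rw [h2, h3]; gcongr; exact (hu k).2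
        _ = ε n + 2 * ‖u k - p‖ := by ring
    have htend : Tendsto (fun k => ε n + 2 * ‖u k - p‖) atTop (nhds (ε n)) := by
      have h0 : Tendsto (fun k => ‖u k - p‖) atTop (nhds 0) :=
        (tendsto_iff_norm_sub_tendsto_zero).1 hup
      have := (h0.const_mul 2).const_add (ε n)
      simpa using this
    exact ⟨hpC, ge_of_tendsto' htend hkey⟩
  have hconv : ∀ n, Convex ℝ (F n) := by
    intro n x hx y hy a b ha hb' hab
    have hb1 : b = 1 - a := by linarith
    have ha1 : a ∈ Set.Icc (0:ℝ) 1 := ⟨ha, by linarith⟩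
    have hT : T (a • x + (1 - a) • y) = a • T x + (1 - a) • T y :=
      hTaff x hx.1 y hy.1 a ha1
    have hmemC : a • x + b • y ∈ C := hCconv hx.1 hy.1 ha hb' hab
    refine ⟨hmemC, ?_⟩
    have heq : a • x + b • y - T (a • x + b • y) = a • (x - T x) + b • (y - T y) := by
      rw [hb1, hT, smul_sub, smul_sub]
      abel
    calc ‖a • x + b • y - T (a • x + b • y)‖
        = ‖a • (x - T x) + b • (y - T y)‖ := by rw [heq]
      _ ≤ ‖a • (x - T x)‖ + ‖b • (y - T y)‖ := norm_add_le _ _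
      _ = a * ‖x - T x‖ + b * ‖y - T y‖ := by
          rw [norm_smul, norm_smul, Real.norm_of_nonneg ha, Real.norm_of_nonneg hb']
      _ ≤ a * ε n + b * ε n := by gcongr; exacts [hx.2, hy.2]
      _ = ε n := by rw [← add_mul, hab, one_mul]
  obtain ⟨x, hx⟩ := aux_inter_nonempty hrefl F hmono hne hb hc hconv
  have hxall := Set.mem_iInter.1 hx
  have hxC : x ∈ C := (hxall 0).1
  refine ⟨x, hxC, ?_⟩
  have hle : ‖x - T x‖ ≤ 0 := by
    have htend : Tendsto ε atTop (nhds 0) := tendsto_one_div_add_atTop_nhds_zero_nat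
    exact ge_of_tendsto' htend fun n => (hxall n).2
  have : x - T x = 0 := by
    have := le_antisymm hle (norm_nonneg _)
    exact norm_eq_zero.1 this
  have := sub_eq_zero.1 this
  exact this.symm
end

section
/- Let T be the shift map on ℓ¹(ℤ), (Tx)_n = x_{n−1}. For all x, y ∈ ℓ¹(ℤ), lim_{n→∞} ‖x − T^n y‖₁ = ‖x‖₁ + ‖y‖₁. Consequently, for any fixed y the functions h_{T^n y}(x) = ‖x − T^n y‖₁ − ‖T^n y‖₁ converge pointwise to h(x) = ‖x‖₁. -/
open Filter

/-- For the bilateral shift `T` on `ℓ¹(ℤ)` (so `(T^n y)_m = y_{m-n}`),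
`‖x - T^n y‖₁ → ‖x‖₁ + ‖y‖₁` as `n → ∞`, and consequently the metric functionals
`h_{T^n y}(x) = ‖x - T^n y‖₁ - ‖T^n y‖₁` converge pointwise to `h(x) = ‖x‖₁`. -/
theorem shift_orbit_converges_to_norm_functional
    (x y : ℤ → ℝ) (hx : Summable fun m => |x m|) (hy : Summable fun m => |y m|) :
    Tendsto (fun n : ℕ => ∑' m : ℤ, |x m - y (m - (n : ℤ))|) atTop
      (nhds ((∑' m : ℤ, |x m|) + ∑' m : ℤ, |y m|)) ∧
    Tendsto (fun n : ℕ =>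
        (∑' m : ℤ, |x m - y (m - (n : ℤ))|) - ∑' m : ℤ, |y (m - (n : ℤ))|) atTop
      (nhds (∑' m : ℤ, |x m|)) := by
  -- y tends to 0 at cofinite
  have hy0 : Tendsto y cofinite (nhds 0) :=
    (summable_abs_iff.mp hy).tendsto_cofinite_zero
  have hmn : ∀ m : ℤ, Tendsto (fun n : ℕ => y (m - (n : ℤ))) atTop (nhds 0) := by
    intro m
    have hinj : Function.Injective (fun n : ℕ => m - (n : ℤ)) := by
      intro a b h; simpa using h
    have := hy0.comp (hinj.tendsto_cofinite)
    rwa [Nat.cofinite_eq_atTop] at this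
  -- shifted sums are invariant
  have hshift : ∀ n : ℕ, (∑' m : ℤ, |y (m - (n : ℤ))|) = ∑' m : ℤ, |y m| := by
    intro n
    exact (Equiv.subRight (n : ℤ)).tsum_eq (fun m => |y m|)
  have hshiftsum : ∀ n : ℕ, Summable fun m : ℤ => |y (m - (n : ℤ))| := by
    intro n
    exact ((Equiv.subRight (n : ℤ)).summable_iff (f := fun m => |y m|)).mpr hy
  -- main dominated convergence result
  have key : Tendsto
      (fun n : ℕ => ∑' m : ℤ, (|x m - y (m - (n : ℤ))| - |y (m - (n : ℤ))|)) atTop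
      (nhds (∑' m : ℤ, |x m|)) := by
    apply tendsto_tsum_of_dominated_convergence hx
    · intro m
      have : Tendsto (fun n : ℕ => |x m - y (m - (n : ℤ))| - |y (m - (n : ℤ))|)
          atTop (nhds (|x m - 0| - |(0:ℝ)|)) := by
        have h1 := (hmn m)
        exact (((tendsto_const_nhds (x := x m)).sub h1).abs).sub h1.abs
      simpa using this
    · filter_upwards with n m
      have h1 : |(|x m - y (m - (n : ℤ))| - |y (m - (n : ℤ))|)| ≤ |x m| := by
        have := abs_abs_sub_abs_le_abs_sub (x m - y (m - (n : ℤ))) (- y (m - (n : ℤ)))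
        simp only [abs_neg, sub_neg_eq_add, sub_add_cancel] at this
        simpa using this
      simpa using h1
  -- summability of the combined terms
  have hsum : ∀ n : ℕ, Summable fun m : ℤ => |x m - y (m - (n : ℤ))| := by
    intro n
    apply Summable.of_nonneg_of_le (fun m => abs_nonneg _)
      (fun m => abs_sub (x m) (y (m - (n : ℤ)))) (hx.add (hshiftsum n))
  have split : ∀ n : ℕ,
      (∑' m : ℤ, (|x m - y (m - (n : ℤ))| - |y (m - (n : ℤ))|))
        = (∑' m : ℤ, |x m - y (m - (n : ℤ))|) - ∑' m : ℤ, |y (m - (n : ℤ))| := by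
    intro n
    exact Summable.tsum_sub (hsum n) (hshiftsum n)
  have key2 : Tendsto (fun n : ℕ =>
      (∑' m : ℤ, |x m - y (m - (n : ℤ))|) - ∑' m : ℤ, |y (m - (n : ℤ))|) atTop
      (nhds (∑' m : ℤ, |x m|)) := by
    simpa only [split] using key
  refine ⟨?_, key2⟩
  have := key2.add (tendsto_const_nhds (x := ∑' m : ℤ, |y m|))
  convert this using 2 with n
  · rw [← hshift n]; ring
end

section
/- The zero functional is not a metric functional of ℓ^∞(S) for any set S: every pointwise limit of functions h_y(x) = ‖x − y‖_∞ − ‖y‖_∞ (y ∈ ℓ^∞(S)) is an unbounded function on ℓ^∞(S). In particular, for every such limit h and every c > 1 there exists x with |h(x)| > c − 1/2. -/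
/-- The zero functional is not a metric functional of `ℓ^∞(S)`:
every pointwise limit `h` of the functions `h_y(x) = ‖x - y‖_∞ - ‖y‖_∞` is an
unbounded function; in particular for every `c > 1` there is `x` with
`|h x| > c - 1/2`, and `h` is not the zero function. -/
theorem linf_metric_functionals_unbounded
    (S : Type*) [Nonempty S]
    (h : lp (fun _ : S => ℝ) ⊤ → ℝ)
    (hh : h ∈ closure (Set.range fun y : lp (fun _ : S => ℝ) ⊤ =>
      fun x : lp (fun _ : S => ℝ) ⊤ => ‖x - y‖ - ‖y‖)) :
    (∀ c : ℝ, 1 < c → ∃ x, c - 1/2 < |h x|) ∧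
    ¬ BddAbove (Set.range fun x => |h x|) ∧
    h ≠ fun _ => 0 := by
  have key : ∀ c : ℝ, 1 < c → ∃ x, c - 1/2 < |h x| := by
    intro c hc
    have hmem : ∀ r : ℝ, Memℓp (fun _ : S => r) ⊤ := fun r =>
      memℓp_infty ⟨|r|, by rintro _ ⟨s, rfl⟩; simp [Real.norm_eq_abs]⟩
    set u : lp (fun _ : S => ℝ) ⊤ := ⟨fun _ => c, hmem c⟩ with hu
    set v : lp (fun _ : S => ℝ) ⊤ := ⟨fun _ => -c, hmem (-c)⟩ with hv
    set O : Set (lp (fun _ : S => ℝ) ⊤ → ℝ) :=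
      {g | |g u - h u| < 1/4 ∧ |g v - h v| < 1/4} with hO
    have hOopen : IsOpen O := by
      have h1 : IsOpen {g : lp (fun _ : S => ℝ) ⊤ → ℝ | |g u - h u| < 1/4} := by
        have : {g : lp (fun _ : S => ℝ) ⊤ → ℝ | |g u - h u| < 1/4}
            = (fun g : lp (fun _ : S => ℝ) ⊤ → ℝ => g u) ⁻¹' Metric.ball (h u) (1/4) := by
          ext g; simp [Real.dist_eq]
        rw [this]
        exact (Metric.isOpen_ball).preimage (continuous_apply u)
      have h2 : IsOpen {g : lp (fun _ : S => ℝ) ⊤ → ℝ | |g v - h v| < 1/4} := by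
        have : {g : lp (fun _ : S => ℝ) ⊤ → ℝ | |g v - h v| < 1/4}
            = (fun g : lp (fun _ : S => ℝ) ⊤ → ℝ => g v) ⁻¹' Metric.ball (h v) (1/4) := by
          ext g; simp [Real.dist_eq]
        rw [this]
        exact (Metric.isOpen_ball).preimage (continuous_apply v)
      exact h1.inter h2
    have hhO : h ∈ O := by constructor <;> simp
    obtain ⟨g, hgO, hgr⟩ := mem_closure_iff.mp hh O hOopen hhO
    obtain ⟨y, rfl⟩ := hgr
    obtain ⟨hgu, hgv⟩ := hgO
    -- pick a coordinate where |y s| is close to ‖y‖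
    have hy : ‖y‖ - 1/4 < ⨆ s, ‖y s‖ := by
      rw [← lp.norm_eq_ciSup]; linarith
    obtain ⟨s, hs⟩ := exists_lt_of_lt_ciSup hy
    rw [Real.norm_eq_abs] at hs
    rcases le_or_gt 0 (y s) with hys | hys
    · -- use v = const (-c)
      have h1 : ‖(v - y) s‖ ≤ ‖v - y‖ := lp.norm_apply_le_norm ENNReal.top_ne_zero _ s
      have h2 : (v - y) s = -c - y s := by
        rw [lp.coeFn_sub]; rfl
      have h3 : ‖(v - y) s‖ = c + y s := by
        rw [h2, Real.norm_eq_abs, abs_sub_comm, abs_of_nonneg (by linarith)]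
        ring
      have h4 : c - 1/2 < h v := by
        have := abs_lt.mp hgv
        have habs : |y s| = y s := abs_of_nonneg hys
        rw [habs] at hs
        linarith [h1, h3.symm.le.trans h1]
      exact ⟨v, lt_of_lt_of_le h4 (le_abs_self _)⟩
    · -- use u = const c
      have h1 : ‖(u - y) s‖ ≤ ‖u - y‖ := lp.norm_apply_le_norm ENNReal.top_ne_zero _ s
      have h2 : (u - y) s = c - y s := by
        rw [lp.coeFn_sub]; rfl
      have h3 : ‖(u - y) s‖ = c - y s := by
        rw [h2, Real.norm_eq_abs, abs_of_nonneg (by linarith)]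
      have h4 : c - 1/2 < h u := by
        have := abs_lt.mp hgu
        have habs : |y s| = -(y s) := abs_of_neg hys
        rw [habs] at hs
        linarith [h1, h3.symm.le.trans h1]
      exact ⟨u, lt_of_lt_of_le h4 (le_abs_self _)⟩
  refine ⟨key, ?_, ?_⟩
  · rintro ⟨M, hM⟩
    obtain ⟨x, hx⟩ := key (max (M + 1) 2) (lt_of_lt_of_le one_lt_two (le_max_right _ _))
    have hle : |h x| ≤ M := hM ⟨x, rfl⟩
    have : M + 1 ≤ max (M + 1) 2 := le_max_left _ _
    linarith
  · intro hzero
    obtain ⟨x, hx⟩ := key 2 one_lt_two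
    rw [hzero] at hx
    simp at hx
    linarith
end
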